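/- For every odd positive integer b, the inequality κ_b − 2·κ_{(b−1)/2} − (b − 1) ≥ 0 holds. -/

import Mathlib

/-!
Write `b = 2m + 1`. Expanding `κ` gives
`κ_b - 2κ_m - (b - 1) = 4(m + 1)(H_{2m+1} - H_m) - 2m - 4`, so it suffices that
`H_{2m+1} - H_m ≥ 1/2 + 1/(2(m + 1))`. Both sides equal `1` at `m = 0`, and going from `m` to
`m + 1` the left side changes by `1/(2m+3) - 1/(2m+2)` and the right side by the smaller amount
`1/(2m+4) - 1/(2m+2)`.
-/

open Finset Filter Topology

/-- The `n`-th harmonic number `H_n = ∑_{i=1}^n 1/i`. -/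
noncomputable def H (n : ℕ) : ℝ := ∑ i ∈ Finset.range n, (1 : ℝ) / (i + 1)

/-- `κ_n = 2(n+1)H_n - 4n`, the mean number of key comparisons for QuickSort on `n` keys. -/
noncomputable def κ (n : ℕ) : ℝ := 2 * (n + 1) * H n - 4 * n

lemma H_succ (n : ℕ) : H (n + 1) = H n + 1 / (n + 1) := by
  simp [H, Finset.sum_range_succ]

lemma H_two_mul_add_one_sub_H_succ (m : ℕ) :
    H (2 * (m + 1) + 1) - H (m + 1) =
      H (2 * m + 1) - H m + (1 / (2 * m + 3) - 1 / (2 * m + 2)) := by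
  rw [show 2 * (m + 1) + 1 = 2 * m + 1 + 1 + 1 by ring, H_succ (2 * m + 1 + 1), H_succ (2 * m + 1),
    H_succ m]
  have hm : (m : ℝ) + 1 ≠ 0 := by positivity
  push_cast
  field_simp
  ring

lemma one_half_add_le_H_two_mul_add_one_sub_H (m : ℕ) :
    1 / 2 + 1 / (2 * ((m : ℝ) + 1)) ≤ H (2 * m + 1) - H m := by
  induction m with
  | zero => norm_num [H]
  | succ k ih =>
    rw [H_two_mul_add_one_sub_H_succ]
    have hstep : (1 : ℝ) / (2 * k + 4) ≤ 1 / (2 * k + 3) :=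
      one_div_le_one_div_of_le (by positivity) (by linarith)
    have hk : (2 : ℝ) * ((k : ℝ) + 1) = 2 * k + 2 := by ring
    have hk' : (2 : ℝ) * (((k + 1 : ℕ) : ℝ) + 1) = 2 * k + 4 := by push_cast; ring
    rw [hk] at ih
    rw [hk']
    linarith

lemma κ_two_mul_add_one_sub_two_mul_κ (m : ℕ) :
    κ (2 * m + 1) - 2 * κ m - 2 * m = 4 * ((m : ℝ) + 1) * (H (2 * m + 1) - H m) - 2 * m - 4 := by
  simp only [κ]
  push_cast
  ring

theorem kappa_odd_inequality_general (b : ℕ) (hodd : Odd b) :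
    0 ≤ κ b - 2 * κ ((b - 1) / 2) - ((b : ℝ) - 1) := by
  obtain ⟨m, rfl⟩ := hodd
  rw [show (2 * m + 1 - 1) / 2 = m by omega]
  push_cast
  have hm : (0 : ℝ) < m + 1 := by positivity
  have hbound : 2 * (m : ℝ) + 4 ≤ 4 * (m + 1) * (H (2 * m + 1) - H m) := by
    calc 2 * (m : ℝ) + 4 = 4 * (m + 1) * (1 / 2 + 1 / (2 * (m + 1))) := by field_simp; ring
      _ ≤ 4 * (m + 1) * (H (2 * m + 1) - H m) := by
        gcongr; exact one_half_add_le_H_two_mul_add_one_sub_H m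
  linarith [κ_two_mul_add_one_sub_two_mul_κ m]

theorem kappa_odd_inequality (b : ℕ) (hb : 0 < b) (hodd : Odd b) :
    0 ≤ κ b - 2 * κ ((b - 1) / 2) - ((b : ℝ) - 1) :=
  kappa_odd_inequality_general b hodd
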